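/- Let n ≥ 2 and ε > 0. Suppose the finite sequence R_1, …, R_N of bounded axis-parallel rectangles in ℝ^n satisfies property (P_2) with parameter ε. Then for every t ∈ ℝ, the sequence of (n−1)-dimensional axis-parallel rectangles P_t(R_1), …, P_t(R_N) satisfies property (P_1) with the same parameter ε: |P_t(R_k) ∩ ∪_{j<k} P_t(R_j)| ≤ ε |P_t(R_k)| for every k = 1, …, N, where |·| is (n−1)-dimensional Lebesgue measure. -/

import Mathlib

/-! For `t` in the last side `I_k` of `R_k`, every point `x'` of `P_t(R_k) ∩ P_t(R_j)` with
`j < k` lies over a side `I_j ∋ t` at least as long as `I_k`, so `I_k ⊆ I_j^*` and the whole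
segment `{x'} × I_k` lies in `R_k ∩ R_j^*`. Hence `|I_k| · |P_t(R_k) ∩ ⋃_{j<k} P_t(R_j)|`
is at most `|R_k ∩ ⋃_{j<k} R_j^*| ≤ ε |R_k| = ε |I_k| · |P_t(R_k)|`, and `|I_k|` cancels. -/

open MeasureTheory Set
open scoped ENNReal

noncomputable section

/-- An axis-parallel rectangle in `ℝ^d`: a product of `d` bounded (open) intervals. -/
def Rect {d : ℕ} (a b : Fin d → ℝ) : Set (Fin d → ℝ) :=
  Set.univ.pi fun i => Set.Ioo (a i) (b i)

/-- Left endpoints of `R^*`: the rectangle with the same center as `R = Rect a b`,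
the same sides in the first `m` coordinates, and the last side dilated by `3`. -/
def starA {m : ℕ} (a b : Fin (m + 1) → ℝ) : Fin (m + 1) → ℝ :=
  Function.update a (Fin.last m) (2 * a (Fin.last m) - b (Fin.last m))

/-- Right endpoints of `R^*`. -/
def starB {m : ℕ} (a b : Fin (m + 1) → ℝ) : Fin (m + 1) → ℝ :=
  Function.update b (Fin.last m) (2 * b (Fin.last m) - a (Fin.last m))

/-- Property `(P₂)` with parameter `ε` for a finite sequence of axis-parallel rectangles
`R_k = Rect (a k) (b k)` in `ℝ^{m+1}`: the lengths `|P^⊥(R_k)|` of the sides parallel to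
the last coordinate axis are nonincreasing, and
`|R_k ∩ ⋃_{j<k} R_j^*| ≤ ε |R_k|` for every `k`. -/
def P2prop {m : ℕ} (ε : ℝ) {N : ℕ} (a b : Fin N → Fin (m + 1) → ℝ) : Prop :=
  (∀ j k : Fin N, j ≤ k →
      b k (Fin.last m) - a k (Fin.last m) ≤ b j (Fin.last m) - a j (Fin.last m)) ∧
  ∀ k : Fin N,
    volume (Rect (a k) (b k) ∩
        ⋃ (j : Fin N) (_ : j < k), Rect (starA (a j) (b j)) (starB (a j) (b j)))
      ≤ ENNReal.ofReal ε * volume (Rect (a k) (b k))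

/-- The slice `P_t(E) = {x' ∈ ℝ^m : (x', t) ∈ E}` of a set `E ⊆ ℝ^{m+1}` by the
hyperplane perpendicular to the last coordinate axis at level `t`. -/
def sliceAt {m : ℕ} (t : ℝ) (E : Set (Fin (m + 1) → ℝ)) : Set (Fin m → ℝ) :=
  {x' | Fin.snoc x' t ∈ E}

lemma Ioo_subset_Ioo_dilate {a b a' b' t : ℝ} (ht : t ∈ Ioo a b) (ht' : t ∈ Ioo a' b')
    (hlen : b - a ≤ b' - a') : Ioo a b ⊆ Ioo (2 * a' - b') (2 * b' - a') := by
  rintro s ⟨hs₁, hs₂⟩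
  obtain ⟨ht₁, ht₂⟩ := ht
  obtain ⟨ht₁', ht₂'⟩ := ht'
  constructor <;> linarith

section Rect

variable {m : ℕ}

lemma snoc_mem_rect {a b : Fin (m + 1) → ℝ} {x : Fin m → ℝ} {s : ℝ} :
    (Fin.snoc x s : Fin (m + 1) → ℝ) ∈ Rect a b ↔
      s ∈ Ioo (a (Fin.last m)) (b (Fin.last m)) ∧
        x ∈ Rect (a ∘ Fin.castSucc) (b ∘ Fin.castSucc) := by
  simp only [Rect, mem_univ_pi, Fin.forall_fin_succ', Fin.snoc_castSucc, Fin.snoc_last,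
    Function.comp_apply]
  exact and_comm

@[simp]
lemma starA_comp_castSucc (a b : Fin (m + 1) → ℝ) : starA a b ∘ Fin.castSucc = a ∘ Fin.castSucc :=
  funext fun i => Function.update_of_ne (Fin.castSucc_lt_last i).ne _ _

@[simp]
lemma starB_comp_castSucc (a b : Fin (m + 1) → ℝ) : starB a b ∘ Fin.castSucc = b ∘ Fin.castSucc :=
  funext fun i => Function.update_of_ne (Fin.castSucc_lt_last i).ne _ _

lemma sliceAt_rect_of_mem {t : ℝ} {a b : Fin (m + 1) → ℝ}
    (ht : t ∈ Ioo (a (Fin.last m)) (b (Fin.last m))) :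
    sliceAt t (Rect a b) = Rect (a ∘ Fin.castSucc) (b ∘ Fin.castSucc) := by
  ext x
  exact snoc_mem_rect.trans (and_iff_right ht)

lemma sliceAt_rect_of_notMem {t : ℝ} {a b : Fin (m + 1) → ℝ}
    (ht : t ∉ Ioo (a (Fin.last m)) (b (Fin.last m))) : sliceAt t (Rect a b) = ∅ :=
  eq_empty_of_forall_notMem fun _ hx => ht (snoc_mem_rect.1 hx).1

lemma snoc_mem_rect_star {t s : ℝ} {a b a' b' : Fin (m + 1) → ℝ} {x : Fin m → ℝ}
    (hlen : b (Fin.last m) - a (Fin.last m) ≤ b' (Fin.last m) - a' (Fin.last m))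
    (hx : x ∈ sliceAt t (Rect a b)) (hx' : x ∈ sliceAt t (Rect a' b'))
    (hs : s ∈ Ioo (a (Fin.last m)) (b (Fin.last m))) :
    (Fin.snoc x s : Fin (m + 1) → ℝ) ∈ Rect (starA a' b') (starB a' b') := by
  obtain ⟨ht, -⟩ := snoc_mem_rect.1 hx
  obtain ⟨ht', hx'⟩ := snoc_mem_rect.1 hx'
  refine snoc_mem_rect.2 ⟨?_, by simpa using hx'⟩
  simpa [starA, starB] using Ioo_subset_Ioo_dilate ht ht' hlen hs

lemma volume_rect_eq_mul_last (a b : Fin (m + 1) → ℝ) :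
    volume (Rect a b) = volume (Rect (a ∘ Fin.castSucc) (b ∘ Fin.castSucc)) *
      volume (Ioo (a (Fin.last m)) (b (Fin.last m))) := by
  simp only [Rect, volume_pi_pi, Real.volume_Ioo, Fin.prod_univ_castSucc, Function.comp_apply]

end Rect

lemma volume_mul_le_of_snoc_mem {m : ℕ} {A : Set ℝ} {S : Set (Fin m → ℝ)}
    {E : Set (Fin (m + 1) → ℝ)} (h : ∀ s ∈ A, ∀ x ∈ S, (Fin.snoc x s : Fin (m + 1) → ℝ) ∈ E) :
    volume A * volume S ≤ volume E := by
  set e := MeasurableEquiv.piFinSuccAbove (fun _ : Fin (m + 1) => ℝ) (Fin.last m)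
  have he : ∀ p : ℝ × (Fin m → ℝ), e.symm p = Fin.snoc p.2 p.1 := fun p =>
    Fin.insertNth_last' p.1 p.2
  calc volume A * volume S = volume (A ×ˢ S) := by
        rw [Measure.volume_eq_prod, Measure.prod_prod]
    _ ≤ volume (e.symm ⁻¹' E) := measure_mono fun p hp => by
        simpa only [mem_preimage, he] using h p.1 hp.1 p.2 hp.2
    _ = volume E :=
        ((volume_preserving_piFinSuccAbove (fun _ => ℝ) (Fin.last m)).symm e).measure_preimage_equiv
          E

theorem slices_satisfy_P1_general
    (m : ℕ) (ε : ℝ) (N : ℕ)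
    (a b : Fin N → Fin (m + 1) → ℝ)
    (hP2 : P2prop ε a b) :
    ∀ t : ℝ, ∀ k : Fin N,
      volume (sliceAt t (Rect (a k) (b k)) ∩
          ⋃ (j : Fin N) (_ : j < k), sliceAt t (Rect (a j) (b j)))
        ≤ ENNReal.ofReal ε * volume (sliceAt t (Rect (a k) (b k))) := by
  intro t k
  set I := Ioo (a k (Fin.last m)) (b k (Fin.last m))
  by_cases ht : t ∈ I
  case neg => simp [sliceAt_rect_of_notMem ht]
  have hsegment : ∀ s ∈ I, ∀ x ∈ sliceAt t (Rect (a k) (b k)) ∩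
      ⋃ (j : Fin N) (_ : j < k), sliceAt t (Rect (a j) (b j)),
      (Fin.snoc x s : Fin (m + 1) → ℝ) ∈ Rect (a k) (b k) ∩
        ⋃ (j : Fin N) (_ : j < k), Rect (starA (a j) (b j)) (starB (a j) (b j)) := by
    rintro s hs x ⟨hxk, hxU⟩
    obtain ⟨j, hjk, hxj⟩ := mem_iUnion₂.1 hxU
    exact ⟨snoc_mem_rect.2 ⟨hs, (snoc_mem_rect.1 hxk).2⟩,
      mem_iUnion₂.2 ⟨j, hjk, snoc_mem_rect_star (hP2.1 j k hjk.le) hxk hxj hs⟩⟩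
  have hI₀ : volume I ≠ 0 := by simpa [I, Real.volume_Ioo] using ht.1.trans ht.2
  refine (ENNReal.mul_le_mul_iff_right hI₀ measure_Ioo_lt_top.ne).1 ?_
  calc volume I * _ ≤ _ := volume_mul_le_of_snoc_mem hsegment
    _ ≤ ENNReal.ofReal ε * volume (Rect (a k) (b k)) := hP2.2 k
    _ = volume I * (ENNReal.ofReal ε * volume (sliceAt t (Rect (a k) (b k)))) := by
        rw [volume_rect_eq_mul_last, sliceAt_rect_of_mem ht]; ring

/-- Slicing lemma: if a finite sequence of rectangles in `ℝ^n` (`n = m+1 ≥ 2`) has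
property `(P₂)` with parameter `ε`, then for every `t ∈ ℝ` the sliced sequence of
`(n-1)`-dimensional rectangles has property `(P₁)` with the same parameter `ε`:
`|P_t(R_k) ∩ ⋃_{j<k} P_t(R_j)| ≤ ε |P_t(R_k)|` for all `k`. -/
theorem slices_satisfy_P1
    (m : ℕ) (hm : 1 ≤ m) (ε : ℝ) (hε : 0 < ε) (N : ℕ)
    (a b : Fin N → Fin (m + 1) → ℝ) (hab : ∀ k i, a k i < b k i)
    (hP2 : P2prop ε a b) :
    ∀ t : ℝ, ∀ k : Fin N,
      volume (sliceAt t (Rect (a k) (b k)) ∩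
          ⋃ (j : Fin N) (_ : j < k), sliceAt t (Rect (a j) (b j)))
        ≤ ENNReal.ofReal ε * volume (sliceAt t (Rect (a k) (b k))) :=
  slices_satisfy_P1_general m ε N a b hP2
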